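/- Let ℓ ≥ 1 be an integer, let g₁, …, g_ℓ : ℝ → ℝ be differentiable functions with everywhere positive derivative, let x ∈ ℝ, and set z₀ = x and z_i = g_i(z_{i−1}) for 1 ≤ i ≤ ℓ. Let a > 0 and 0 < ε < a, and suppose that log((g_ℓ ∘ ⋯ ∘ g₁)'(x)) ≥ a·ℓ. Then there exists an index q with 1 ≤ q ≤ ℓ such that log((g_q ∘ ⋯ ∘ g₁)'(x)) ≥ (a − ε)·ℓ and, for every i with 1 ≤ i ≤ q, log((g_q ∘ ⋯ ∘ g_i)'(z_{i−1})) > (q − i + 1)·ε. -/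

import Mathlib

/-- `compFrom g i k = g_{i+k-1} ∘ ⋯ ∘ g_{i+1} ∘ g_i` is the composition of the `k`
consecutive maps starting at index `i` (the empty composition being the identity). -/
def compFrom (g : ℕ → ℝ → ℝ) (i : ℕ) : ℕ → ℝ → ℝ
  | 0 => id
  | k + 1 => g (i + k) ∘ compFrom g i k

/-!
Write `s j` for the log-derivative at `x` of the first `j` maps. By the chain rule the
log-derivative of the suffix `g_q ∘ ⋯ ∘ g_i` at `z_{i-1}` is `s q - s (i - 1)`. Take `q` to be
the first index `j ≤ ℓ` at which `s j - j ε` is maximal. Maximality against `j = ℓ` gives the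
expansion `s q ≥ (a - ε) ℓ`, strict maximality against every earlier `j = i - 1` gives the
suffix bounds, and `q ≠ 0` because `s ℓ - ℓ ε ≥ (a - ε) ℓ > 0 = s 0`.
-/

theorem exists_le_first_max {α : Type*} [LinearOrder α] (f : ℕ → α) (ℓ : ℕ) :
    ∃ q ≤ ℓ, (∀ j ≤ ℓ, f j ≤ f q) ∧ ∀ j < q, f j < f q := by
  have hmax : ∃ q, q ≤ ℓ ∧ ∀ j ≤ ℓ, f j ≤ f q := by
    obtain ⟨b, hb, hb_max⟩ := Finset.exists_max_image (Finset.range (ℓ + 1)) f ⟨0, by simp⟩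
    exact ⟨b, Nat.lt_succ_iff.mp (Finset.mem_range.mp hb),
      fun j hj => hb_max j (Finset.mem_range.mpr (Nat.lt_succ_of_le hj))⟩
  obtain ⟨hqℓ, hq_max⟩ := Nat.find_spec hmax
  refine ⟨Nat.find hmax, hqℓ, hq_max, fun j hj => ?_⟩
  have hjℓ : j ≤ ℓ := hj.le.trans hqℓ
  have hj_not_max := Nat.find_min hmax hj
  push Not at hj_not_max
  obtain ⟨k, hkℓ, hjk⟩ := hj_not_max hjℓ
  exact hjk.trans_le (hq_max k hkℓ)

theorem compFrom_add (g : ℕ → ℝ → ℝ) (i m n : ℕ) :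
    compFrom g i (m + n) = compFrom g (i + m) n ∘ compFrom g i m := by
  induction n with
  | zero => rfl
  | succ n ih =>
    change g (i + (m + n)) ∘ compFrom g i (m + n) = g (i + m + n) ∘ compFrom g (i + m) n ∘ _
    rw [ih, Nat.add_assoc]

section Expansion

variable {g : ℕ → ℝ → ℝ} {i k : ℕ}

theorem differentiable_compFrom (hdiff : ∀ j, i ≤ j → j < i + k → Differentiable ℝ (g j)) :
    Differentiable ℝ (compFrom g i k) := by
  induction k with
  | zero => exact differentiable_id
  | succ k ih =>
    exact (hdiff (i + k) (by omega) (by omega)).comp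
      (ih fun j hij hjk => hdiff j hij (by omega))

theorem deriv_compFrom_pos (hdiff : ∀ j, i ≤ j → j < i + k → Differentiable ℝ (g j))
    (hpos : ∀ j, i ≤ j → j < i + k → ∀ y, 0 < deriv (g j) y) (y : ℝ) :
    0 < deriv (compFrom g i k) y := by
  induction k generalizing y with
  | zero => simp [compFrom]
  | succ k ih =>
    have hdiff' : ∀ j, i ≤ j → j < i + k → Differentiable ℝ (g j) :=
      fun j hij hjk => hdiff j hij (by omega)
    change 0 < deriv (g (i + k) ∘ compFrom g i k) y
    rw [deriv_comp y ((hdiff (i + k) (by omega) (by omega)).differentiableAt)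
      ((differentiable_compFrom hdiff').differentiableAt)]
    exact mul_pos (hpos (i + k) (by omega) (by omega) _)
      (ih hdiff' (fun j hij hjk => hpos j hij (by omega)) y)

theorem log_deriv_compFrom_add {m n : ℕ}
    (hdiff : ∀ j, i ≤ j → j < i + (m + n) → Differentiable ℝ (g j))
    (hpos : ∀ j, i ≤ j → j < i + (m + n) → ∀ y, 0 < deriv (g j) y) (x : ℝ) :
    Real.log (deriv (compFrom g i (m + n)) x) =
      Real.log (deriv (compFrom g (i + m) n) (compFrom g i m x)) +
        Real.log (deriv (compFrom g i m) x) := by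
  have hdiff_pre : ∀ j, i ≤ j → j < i + m → Differentiable ℝ (g j) :=
    fun j hij hjm => hdiff j hij (by omega)
  have hdiff_suf : ∀ j, i + m ≤ j → j < i + m + n → Differentiable ℝ (g j) :=
    fun j hij hjn => hdiff j (by omega) (by omega)
  have hpos_pre : 0 < deriv (compFrom g i m) x :=
    deriv_compFrom_pos hdiff_pre (fun j hij hjm => hpos j hij (by omega)) x
  have hpos_suf : 0 < deriv (compFrom g (i + m) n) (compFrom g i m x) :=
    deriv_compFrom_pos hdiff_suf (fun j hij hjn => hpos j (by omega) (by omega)) _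
  rw [compFrom_add, deriv_comp x (differentiable_compFrom hdiff_suf).differentiableAt
    (differentiable_compFrom hdiff_pre).differentiableAt, Real.log_mul hpos_suf.ne' hpos_pre.ne']

end Expansion

theorem partial_composition_expansion_general
    (ℓ : ℕ) (hℓ : 1 ≤ ℓ) (g : ℕ → ℝ → ℝ)
    (hdiff : ∀ i : ℕ, 1 ≤ i → i ≤ ℓ → Differentiable ℝ (g i))
    (hpos : ∀ i : ℕ, 1 ≤ i → i ≤ ℓ → ∀ y : ℝ, 0 < deriv (g i) y)
    (x : ℝ) (a ε : ℝ) (hε : 0 < ε) (hεa : ε < a)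
    (hexp : a * (ℓ : ℝ) ≤ Real.log (deriv (compFrom g 1 ℓ) x)) :
    ∃ q : ℕ, 1 ≤ q ∧ q ≤ ℓ ∧
      (a - ε) * (ℓ : ℝ) ≤ Real.log (deriv (compFrom g 1 q) x) ∧
      ∀ i : ℕ, 1 ≤ i → i ≤ q →
        ((q - i + 1 : ℕ) : ℝ) * ε <
          Real.log (deriv (compFrom g i (q - i + 1)) (compFrom g 1 (i - 1) x)) := by
  set s : ℕ → ℝ := fun j => Real.log (deriv (compFrom g 1 j) x)
  obtain ⟨q, hqℓ, hq_max, hq_first⟩ := exists_le_first_max (fun j => s j - j * ε) ℓ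
  have hq_ge_ℓ : s ℓ - ℓ * ε ≤ s q - q * ε := hq_max ℓ le_rfl
  have hs_zero : s 0 = 0 := by simp [s, compFrom]
  have hℓ_pos : (0 : ℝ) < ℓ := by exact_mod_cast hℓ
  have hq_pos : 1 ≤ q := by
    by_contra! hq
    obtain rfl : q = 0 := by omega
    simp only [hs_zero, CharP.cast_eq_zero, zero_mul, sub_zero] at hq_ge_ℓ
    nlinarith
  refine ⟨q, hq_pos, hqℓ, by nlinarith, fun i hi hiq => ?_⟩
  have hsplit : s q =
      Real.log (deriv (compFrom g i (q - i + 1)) (compFrom g 1 (i - 1) x)) + s (i - 1) := by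
    have h := log_deriv_compFrom_add (g := g) (i := 1) (m := i - 1) (n := q - i + 1)
      (fun j hj hjq => hdiff j hj (by omega)) (fun j hj hjq => hpos j hj (by omega)) x
    rwa [show 1 + (i - 1) = i by omega, show i - 1 + (q - i + 1) = q by omega] at h
  have hq_gt := hq_first (i - 1) (by omega)
  have hcast : ((q - i + 1 : ℕ) : ℝ) = q - ((i - 1 : ℕ) : ℝ) := by
    rw [eq_sub_iff_add_eq]; norm_cast; omega
  rw [hcast]
  linarith

/-- If the full composition `g_ℓ ∘ ⋯ ∘ g₁` expands by at least `e^{aℓ}` at `x`, then for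
any `0 < ε < a` there is an index `q ≤ ℓ` such that the partial composition
`g_q ∘ ⋯ ∘ g₁` already expands by at least `e^{(a-ε)ℓ}` at `x`, and every suffix
`g_q ∘ ⋯ ∘ g_i` expands by more than `e^{(q-i+1)ε}` at `z_{i-1}`. -/
theorem partial_composition_expansion
    (ℓ : ℕ) (hℓ : 1 ≤ ℓ) (g : ℕ → ℝ → ℝ)
    (hdiff : ∀ i : ℕ, 1 ≤ i → i ≤ ℓ → Differentiable ℝ (g i))
    (hpos : ∀ i : ℕ, 1 ≤ i → i ≤ ℓ → ∀ y : ℝ, 0 < deriv (g i) y)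
    (x : ℝ) (a ε : ℝ) (ha : 0 < a) (hε : 0 < ε) (hεa : ε < a)
    (hexp : a * (ℓ : ℝ) ≤ Real.log (deriv (compFrom g 1 ℓ) x)) :
    ∃ q : ℕ, 1 ≤ q ∧ q ≤ ℓ ∧
      (a - ε) * (ℓ : ℝ) ≤ Real.log (deriv (compFrom g 1 q) x) ∧
      ∀ i : ℕ, 1 ≤ i → i ≤ q →
        ((q - i + 1 : ℕ) : ℝ) * ε <
          Real.log (deriv (compFrom g i (q - i + 1)) (compFrom g 1 (i - 1) x)) :=
  partial_composition_expansion_general ℓ hℓ g hdiff hpos x a ε hε hεa hexp
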